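/- For the polynomial von Mangoldt function Λ (with Λ(P^m) = deg P for monic irreducible P and positive integer m, zero otherwise on monic polynomials), the logarithmic derivative of the zeta function Z(T) = 1/(1-qT) satisfies T · d/dT log Z(T) = Σ_{n≥1} (Σ_{f ∈ M_n} Λ(f)) T^n; equivalently Σ_{f ∈ M_n} Λ(f) = q^n for every n ≥ 1 (the prime polynomial theorem identity). -/

import Mathlib

/-!
Let `L` be the extension of `𝔽_q` of degree `n`. Sorting the `q ^ n` elements of `L` by their
minimal polynomials, every monic irreducible `P` with `deg P ∣ n` occurs, and since `L / 𝔽_q` is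
Galois it occurs exactly `deg P` times; hence `q ^ n = ∑_{deg P ∣ n} deg P`. On the other side,
the monic prime powers of degree `n` are exactly the `P ^ (n / deg P)` for these `P`, and `Λ`
gives each of them the weight `deg P`.
-/

open Finset Polynomial

theorem card_eq_sum_natDegree_minpoly (K L : Type*) [Field K] [Field L] [Algebra K L]
    [Fintype L] [DecidableEq K[X]] [Normal K L] [Algebra.IsSeparable K L] :
    Fintype.card L = ∑ P ∈ univ.image (minpoly K : L → K[X]), P.natDegree := by
  rw [← card_univ, card_eq_sum_card_image (minpoly K) univ]
  refine sum_congr rfl fun P hP ↦ ?_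
  obtain ⟨x, -, rfl⟩ := mem_image.mp hP
  have hsep := Algebra.IsSeparable.isSeparable K x
  have hx : IsIntegral K x := hsep.isIntegral
  rw [← card_rootSet_eq_natDegree hsep (Normal.splits inferInstance x), ← Set.toFinset_card]
  congr 1
  ext y
  simp only [mem_filter, mem_univ, true_and, Set.mem_toFinset,
    mem_rootSet_of_ne (minpoly.ne_zero hx), eq_comm (a := minpoly K y)]
  exact minpoly.eq_iff_aeval_minpoly_eq_zero hx

theorem FiniteField.mem_image_minpoly_iff {K L : Type*} [Field K] [Finite K] [Field L]
    [Algebra K L] [Fintype L] [DecidableEq K[X]] {P : K[X]} :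
    P ∈ univ.image (minpoly K : L → K[X]) ↔
      P.Monic ∧ Irreducible P ∧ P.natDegree ∣ Module.finrank K L := by
  constructor
  · intro hP
    obtain ⟨x, -, rfl⟩ := mem_image.mp hP
    have hx : IsIntegral K x := .of_finite K x
    exact ⟨minpoly.monic hx, minpoly.irreducible hx, minpoly.degree_dvd hx⟩
  · rintro ⟨hmonic, hirr, hdvd⟩
    have hPdvd : P ∣ X ^ Fintype.card L - X := by
      rw [Fintype.card_eq_nat_card, Module.natCard_eq_pow_finrank (K := K)]
      exact hirr.natDegree_dvd_iff_dvd_X_pow_card_pow_sub_X.mp hdvd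
    have hsplits : (P.map (algebraMap K L)).Splits :=
      (FiniteField.isSplittingField_sub L K).splits.of_dvd
        (Polynomial.map_ne_zero (FiniteField.X_pow_card_sub_X_ne_zero K Fintype.one_lt_card))
        (Polynomial.map_dvd (algebraMap K L) hPdvd)
    obtain ⟨x, hx⟩ := hsplits.exists_eval_eq_zero (by rw [degree_map]; exact hirr.degree_pos.ne')
    rw [eval_map_algebraMap] at hx
    exact mem_image.mpr ⟨x, mem_univ x, (minpoly.eq_of_irreducible_of_monic hirr hx hmonic).symm⟩

theorem Polynomial.Monic.eq_of_irreducible_of_pow_eq_pow {K : Type*} [Field K] {P Q : K[X]}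
    {a b : ℕ} (hP : P.Monic) (hQ : Q.Monic) (hPirr : Irreducible P) (hQirr : Irreducible Q)
    (ha : a ≠ 0) (h : P ^ a = Q ^ b) : P = Q :=
  eq_of_monic_of_associated hP hQ <| hPirr.associated_of_dvd hQirr <|
    hPirr.prime.dvd_of_dvd_pow (h ▸ dvd_pow_self P ha)

theorem finsum_vonMangoldt_eq_sum_natDegree {K : Type*} [Field K] (Λ : K[X] → ℤ)
    (h1 : ∀ (P : K[X]) (k : ℕ), P.Monic → Irreducible P → 1 ≤ k → Λ (P ^ k) = P.natDegree)
    (h2 : ∀ f : K[X], f.Monic →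
      (¬ ∃ (P : K[X]) (k : ℕ), P.Monic ∧ Irreducible P ∧ 1 ≤ k ∧ f = P ^ k) → Λ f = 0)
    {n : ℕ} (hn : n ≠ 0) (D : Finset K[X])
    (hD : ∀ P, P ∈ D ↔ P.Monic ∧ Irreducible P ∧ P.natDegree ∣ n) :
    ∑ᶠ f : {f : K[X] // f.Monic ∧ f.natDegree = n}, Λ f.1 = ∑ P ∈ D, (P.natDegree : ℤ) := by
  classical
  have hexp : ∀ P ∈ D, n / P.natDegree ≠ 0 := fun P hP ↦ by
    obtain ⟨-, hirr, hdvd⟩ := (hD P).mp hP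
    exact (Nat.div_pos (Nat.le_of_dvd (Nat.pos_of_ne_zero hn) hdvd) hirr.natDegree_pos).ne'
  have hinj : Set.InjOn (fun P : K[X] ↦ P ^ (n / P.natDegree)) D := fun P hP Q hQ h ↦
    ((hD P).mp hP).1.eq_of_irreducible_of_pow_eq_pow ((hD Q).mp hQ).1 ((hD P).mp hP).2.1
      ((hD Q).mp hQ).2.1 (hexp P hP) h
  refine (finsum_set_coe_eq_finsum_mem {f : K[X] | f.Monic ∧ f.natDegree = n}).trans ?_
  rw [finsum_mem_eq_sum_of_inter_support_eq Λ (t := D.image fun P ↦ P ^ (n / P.natDegree)),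
    sum_image hinj]
  · refine sum_congr rfl fun P hP ↦ ?_
    obtain ⟨hmonic, hirr, -⟩ := (hD P).mp hP
    exact h1 P _ hmonic hirr (Nat.one_le_iff_ne_zero.mpr (hexp P hP))
  ext f
  simp only [Set.mem_inter_iff, Set.mem_ofPred_eq, Function.mem_support, coe_image,
    Set.mem_image, mem_coe]
  refine and_congr_left fun hΛ ↦ ⟨fun ⟨hmonic, hdeg⟩ ↦ ?_, ?_⟩
  · obtain ⟨P, k, hPmonic, hirr, -, rfl⟩ := not_not.mp (mt (h2 f hmonic) hΛ)
    rw [natDegree_pow] at hdeg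
    refine ⟨P, (hD P).mpr ⟨hPmonic, hirr, Dvd.intro_left k hdeg⟩, ?_⟩
    rw [← hdeg, Nat.mul_div_cancel _ hirr.natDegree_pos]
  · rintro ⟨P, hP, rfl⟩
    obtain ⟨hmonic, -, hdvd⟩ := (hD P).mp hP
    exact ⟨hmonic.pow _, by rw [natDegree_pow, Nat.div_mul_cancel hdvd]⟩

theorem prime_polynomial_theorem_identity {Fq : Type*} [Field Fq] [Fintype Fq]
    (Λ : Polynomial Fq → ℤ)
    (h1 : ∀ (P : Polynomial Fq) (k : ℕ), P.Monic → Irreducible P → 1 ≤ k →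
      Λ (P ^ k) = P.natDegree)
    (h2 : ∀ f : Polynomial Fq, f.Monic →
      (¬ ∃ (P : Polynomial Fq) (k : ℕ), P.Monic ∧ Irreducible P ∧ 1 ≤ k ∧ f = P ^ k) →
      Λ f = 0)
    (n : ℕ) (hn : 1 ≤ n) :
    ∑ᶠ f : {f : Polynomial Fq // f.Monic ∧ f.natDegree = n}, Λ f.1
      = (Fintype.card Fq : ℤ) ^ n := by
  classical
  obtain ⟨p, _⟩ := CharP.exists Fq
  have : Fact p.Prime := ⟨CharP.char_is_prime Fq p⟩
  have : NeZero n := ⟨by omega⟩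
  let L := FiniteField.Extension Fq p n
  let : Fintype L := .ofFinite L
  calc ∑ᶠ f : {f : Fq[X] // f.Monic ∧ f.natDegree = n}, Λ f.1
      = ∑ P ∈ univ.image (minpoly Fq : L → Fq[X]), (P.natDegree : ℤ) :=
        finsum_vonMangoldt_eq_sum_natDegree Λ h1 h2 (NeZero.ne n) _ fun P ↦ by
          rw [FiniteField.mem_image_minpoly_iff, FiniteField.finrank_extension]
    _ = Fintype.card L := by rw [card_eq_sum_natDegree_minpoly Fq L, Nat.cast_sum]
    _ = (Fintype.card Fq : ℤ) ^ n := by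
      rw [Fintype.card_eq_nat_card, FiniteField.natCard_extension, Nat.card_eq_fintype_card,
        Nat.cast_pow]
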